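/- (Polynomial identity from the proof of Lemma 6.6, the case m = 1.) In R = MvPolynomial (Fin k) (ZMod 2), the following identity holds: ∏_{b∈B} b + ∏_{b∈B} (y + b) + ∏_{b∈B} (y + X_0 + b) = 0, where the products are taken over the multiset B of odd-subset sums. -/

import Mathlib

open MvPolynomial

variable {R : Type*} [CommRing R] {ι : Type*} [DecidableEq ι]

lemma aux_nsmul_even (h2 : ∀ x : R, x + x = 0) {n : ℕ} (hn : ¬ Odd n) (x : R) :
    n • x = 0 := by
  obtain ⟨m, hm⟩ := Nat.not_odd_iff_even.mp hn
  rw [hm, add_nsmul, h2 (m • x)]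

lemma aux_nsmul_odd (h2 : ∀ x : R, x + x = 0) {n : ℕ} (hn : Odd n) (x : R) :
    n • x = x := by
  obtain ⟨m, hm⟩ := hn
  rw [hm, add_nsmul, one_nsmul]
  rw [show 2 * m = m + m by ring, add_nsmul, h2 (m • x), zero_add]

lemma aux_insert (A : Finset ι) (a : ι) (ha : a ∉ A) (w : ι → R) (t : R) :
    ∏ T ∈ (insert a A).powerset, (t + ∑ i ∈ T, w i)
      = (∏ T ∈ A.powerset, (t + ∑ i ∈ T, w i))
        * ∏ T ∈ A.powerset, (t + w a + ∑ i ∈ T, w i) := by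
  rw [Finset.powerset_insert, Finset.prod_union, Finset.prod_image]
  · congr 1
    refine Finset.prod_congr rfl fun T hT => ?_
    have haT : a ∉ T := fun h => ha (Finset.mem_powerset.mp hT h)
    rw [Finset.sum_insert haT]; ring
  · intro T hT T' hT' h
    have := congrArg (fun s => Finset.erase s a) h
    simpa [Finset.erase_insert (fun h => ha (Finset.mem_powerset.mp hT h)),
      Finset.erase_insert (fun h => ha (Finset.mem_powerset.mp hT' h))] using this
  · rw [Finset.disjoint_left]
    intro T hT hT'
    obtain ⟨T', hT'sub, rfl⟩ := Finset.mem_image.mp hT'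
    exact ha (Finset.mem_powerset.mp hT (Finset.mem_insert_self a T'))

lemma aux_add (h2 : ∀ x : R, x + x = 0) (A : Finset ι) (w : ι → R) :
    ∀ t s : R, ∏ T ∈ A.powerset, (t + s + ∑ i ∈ T, w i)
      = (∏ T ∈ A.powerset, (t + ∑ i ∈ T, w i))
        + ∏ T ∈ A.powerset, (s + ∑ i ∈ T, w i) := by
  induction A using Finset.induction with
  | empty => intro t s; simp
  | insert a A ha ih =>
    intro t s
    rw [aux_insert A a ha, aux_insert A a ha, aux_insert A a ha]
    rw [show t + s + w a = t + (s + w a) by ring, ih t s, ih t (s + w a), ih s (w a),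
      ih t (w a)]
    have h2' : (2 : R) = 0 := by have := h2 (1 : R); linear_combination this
    linear_combination (∏ T ∈ A.powerset, (t + ∑ i ∈ T, w i))
      * (∏ T ∈ A.powerset, (s + ∑ i ∈ T, w i)) * h2'

theorem three_fixed_points_polynomial_identity (k : ℕ) (hk : 2 ≤ k)
    (y : MvPolynomial (Fin k) (ZMod 2)) (hy : y = X ⟨k - 1, by omega⟩)
    (B : Multiset (MvPolynomial (Fin k) (ZMod 2)))
    (hB : B = (Finset.univ.filter
        (fun S : Finset (Fin k) => Odd S.card ∧ ∀ i ∈ S, (i : ℕ) < k - 1)).val.map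
        (fun S => ∑ i ∈ S, X i)) :
    B.prod + (B.map (fun b => y + b)).prod
      + (B.map (fun b => y + X ⟨0, by omega⟩ + b)).prod = 0 := by
  subst hy hB
  have h2 : ∀ x : MvPolynomial (Fin k) (ZMod 2), x + x = 0 := by
    intro x
    have h : (2 : MvPolynomial (Fin k) (ZMod 2)) = 0 := by
      have := CharP.cast_eq_zero (MvPolynomial (Fin k) (ZMod 2)) 2
      simpa using this
    linear_combination x * h
  have key : ∀ z0 z1 : Fin k, (z0 : ℕ) = 0 → (z1 : ℕ) = k - 1 →
      ((Finset.univ.filter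
        (fun S : Finset (Fin k) => Odd S.card ∧ ∀ i ∈ S, (i : ℕ) < k - 1)).val.map
        (fun S => ∑ i ∈ S, (X i : MvPolynomial (Fin k) (ZMod 2)))).prod
      + (((Finset.univ.filter
        (fun S : Finset (Fin k) => Odd S.card ∧ ∀ i ∈ S, (i : ℕ) < k - 1)).val.map
        (fun S => ∑ i ∈ S, (X i : MvPolynomial (Fin k) (ZMod 2)))).map
          (fun b => X z1 + b)).prod
      + (((Finset.univ.filter
        (fun S : Finset (Fin k) => Odd S.card ∧ ∀ i ∈ S, (i : ℕ) < k - 1)).val.map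
        (fun S => ∑ i ∈ S, (X i : MvPolynomial (Fin k) (ZMod 2)))).map
          (fun b => X z1 + X z0 + b)).prod = 0 := by
    intro z0 z1 hz0 _hz1
    set A : Finset (Fin k) :=
      Finset.univ.filter (fun i : Fin k => i ≠ z0 ∧ (i : ℕ) < k - 1) with hA
    set w : Fin k → MvPolynomial (Fin k) (ZMod 2) := fun i => X z0 + X i with hw
    set φ : Finset (Fin k) → Finset (Fin k) :=
      fun T => if Odd T.card then T else insert z0 T with hφ
    have hAz0 : ∀ {T : Finset (Fin k)}, T ∈ A.powerset → z0 ∉ T := by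
      intro T hT h
      have := (Finset.mem_filter.mp (Finset.mem_powerset.mp hT h)).2.1
      exact this rfl
    have himg : Finset.univ.filter
        (fun S : Finset (Fin k) => Odd S.card ∧ ∀ i ∈ S, (i : ℕ) < k - 1)
        = A.powerset.image φ := by
      ext S
      simp only [Finset.mem_filter, Finset.mem_univ, true_and, Finset.mem_image,
        Finset.mem_powerset]
      constructor
      · rintro ⟨hodd, hlt⟩
        refine ⟨S.erase z0, ?_, ?_⟩
        · intro i hi
          rw [Finset.mem_erase] at hi
          exact Finset.mem_filter.mpr ⟨Finset.mem_univ i, hi.1, hlt i hi.2⟩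
        · by_cases hz : z0 ∈ S
          · have hc : (S.erase z0).card = S.card - 1 := Finset.card_erase_of_mem hz
            have hpos : 0 < S.card := Finset.card_pos.mpr ⟨z0, hz⟩
            have hno : ¬ Odd (S.erase z0).card := by
              rw [Nat.odd_iff] at hodd ⊢
              omega
            simp only [hφ, hno, if_false]
            exact Finset.insert_erase hz
          · rw [Finset.erase_eq_of_notMem hz]
            simp only [hφ, hodd, if_true]
      · rintro ⟨T, hTA, rfl⟩
        have hz0T : z0 ∉ T := fun h => ((Finset.mem_filter.mp (hTA h)).2.1) rfl
        by_cases h : Odd T.card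
        · have hφT : φ T = T := if_pos h
          rw [hφT]
          exact ⟨h, fun i hi => (Finset.mem_filter.mp (hTA hi)).2.2⟩
        · have hφT : φ T = insert z0 T := if_neg h
          rw [hφT]
          refine ⟨?_, ?_⟩
          · rw [Finset.card_insert_of_notMem hz0T]
            rw [Nat.odd_iff] at h ⊢
            omega
          · intro i hi
            rcases Finset.mem_insert.mp hi with rfl | hi
            · omega
            · exact (Finset.mem_filter.mp (hTA hi)).2.2
    have hinj : Set.InjOn φ ↑A.powerset := by
      intro T hT T' hT' h
      have hT0 : z0 ∉ T := hAz0 (Finset.mem_coe.mp hT)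
      have hT0' : z0 ∉ T' := hAz0 (Finset.mem_coe.mp hT')
      simp only [hφ] at h
      split_ifs at h with h1 h2
      · exact h
      · exact absurd (h ▸ Finset.mem_insert_self z0 T') hT0
      · exact absurd (h ▸ Finset.mem_insert_self z0 T) hT0'
      · have := congrArg (fun s => Finset.erase s z0) h
        simpa [Finset.erase_insert hT0, Finset.erase_insert hT0'] using this
    have hval : (Finset.univ.filter
        (fun S : Finset (Fin k) => Odd S.card ∧ ∀ i ∈ S, (i : ℕ) < k - 1)).val
        = A.powerset.val.map φ := by
      rw [himg, Finset.image_val_of_injOn hinj]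
    have hsum : ∀ T ∈ A.powerset,
        (∑ i ∈ φ T, X i : MvPolynomial (Fin k) (ZMod 2))
          = X z0 + ∑ i ∈ T, w i := by
      intro T hT
      have hz0T : z0 ∉ T := hAz0 hT
      simp only [hw, Finset.sum_add_distrib, Finset.sum_const]
      by_cases h : Odd T.card
      · simp only [hφ, h, if_true, aux_nsmul_odd h2 h]
        rw [← add_assoc, h2, zero_add]
      · simp only [hφ, h, if_false, aux_nsmul_even h2 h, zero_add,
          Finset.sum_insert hz0T]
    have key1 : ∀ t : MvPolynomial (Fin k) (ZMod 2),
        (((Finset.univ.filter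
          (fun S : Finset (Fin k) => Odd S.card ∧ ∀ i ∈ S, (i : ℕ) < k - 1)).val.map
          (fun S => ∑ i ∈ S, X i)).map (fun b => t + b)).prod
        = ∏ T ∈ A.powerset, (t + X z0 + ∑ i ∈ T, w i) := by
      intro t
      rw [Multiset.map_map, hval, Multiset.map_map, Finset.prod_eq_multiset_prod]
      refine congrArg Multiset.prod (Multiset.map_congr rfl ?_)
      intro T hT
      simp only [Function.comp_apply]
      rw [hsum T hT]
      ring
    have key0 : ((Finset.univ.filter
          (fun S : Finset (Fin k) => Odd S.card ∧ ∀ i ∈ S, (i : ℕ) < k - 1)).val.map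
          (fun S => ∑ i ∈ S, X i)).prod
        = ∏ T ∈ A.powerset, (X z0 + ∑ i ∈ T, w i) := by
      rw [hval, Multiset.map_map, Finset.prod_eq_multiset_prod]
      refine congrArg Multiset.prod (Multiset.map_congr rfl ?_)
      intro T hT
      simp only [Function.comp_apply]
      exact hsum T hT
    rw [key0, key1 (X z1), key1 (X z1 + X z0)]
    have key2 : ∏ T ∈ A.powerset, (X z1 + X z0 + X z0 + ∑ i ∈ T, w i)
        = ∏ T ∈ A.powerset, ((X z1 : MvPolynomial (Fin k) (ZMod 2)) + ∑ i ∈ T, w i) := by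
      refine Finset.prod_congr rfl fun T _ => ?_
      linear_combination h2 (X z0)
    rw [key2, aux_add h2 A w (X z1) (X z0)]
    linear_combination h2 ((∏ T ∈ A.powerset, ((X z1 : MvPolynomial (Fin k) (ZMod 2)) + ∑ i ∈ T, w i))
      + ∏ T ∈ A.powerset, ((X z0 : MvPolynomial (Fin k) (ZMod 2)) + ∑ i ∈ T, w i))
  exact key ⟨0, by omega⟩ ⟨k - 1, by omega⟩ rfl rfl
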